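/- With the setup described in the context, assume in addition that V carries a nondegenerate k-bilinear form B satisfying B(g x, g y) = B(x, y) for all x, y ∈ V. Then 2·dim_k((V ⊗_k k⟦X⟧)/S) = m·(dim_k V − dim_k V^g), where V^g = ker(g − id) is the fixed space of g. -/

import Mathlib

/-!
Since `X ^ m - 1` has the distinct roots `ζ ^ i`, the automorphism `g` has an eigenbasis `(b j)`
with `g (b j) = ζ ^ (e j) • b j`. In the `k⟦X⟧`-basis `1 ⊗ b j`, `σ` acts coordinatewise by
`f ↦ ζ ^ (e j) • f(ζX)`, whose fixed series are supported in degrees `≡ -e j (mod m)`. Hence `S` is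
`⊕ X ^ (r (e j)) k⟦X⟧`, where `r i ∈ [0, m)` is the residue of `-i`, and the quotient has dimension
`∑ i, d i * r i` with `d i = dim V_i`. Invariance of `B` makes `V_i` orthogonal to `V_j` unless
`i + j ≡ 0`, so nondegeneracy forces `d i = d (-i)`; pairing `i` with `-i`, for which
`r i + r (-i) = m` when `i ≠ 0`, gives `2 ∑ i, d i * r i = m (dim V - d 0)`.
-/

open TensorProduct

namespace Module.End

variable {k V : Type*} [Field k] [AddCommGroup V] [Module k V]

theorem ker_aeval_prod_X_sub_C (f : End k V) (s : Finset k) :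
    LinearMap.ker (Polynomial.aeval f (∏ μ ∈ s, (Polynomial.X - Polynomial.C μ))) =
      ⨆ μ ∈ s, f.eigenspace μ := by
  classical
  induction s using Finset.induction_on with
  | empty => simp [one_eq_id]
  | insert a s ha ih =>
    have hcop : IsCoprime (Polynomial.X - Polynomial.C a)
        (∏ μ ∈ s, (Polynomial.X - Polynomial.C μ)) :=
      IsCoprime.prod_right fun μ hμ => Polynomial.isCoprime_X_sub_C_of_isUnit_sub
        (sub_ne_zero.mpr (ne_of_mem_of_not_mem hμ ha).symm).isUnit
    rw [Finset.prod_insert ha, ← Polynomial.sup_ker_aeval_eq_ker_aeval_mul_of_coprime _ hcop, ih,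
      Finset.iSup_insert, eigenspace_def]
    simp [Algebra.algebraMap_eq_smul_one]

theorem iSup_eigenspace_pow_eq_top {m : ℕ} [NeZero m] {ζ : k} (hζ : IsPrimitiveRoot ζ m)
    (f : End k V) (hf : f ^ m = 1) : ⨆ i : Fin m, f.eigenspace (ζ ^ (i : ℕ)) = ⊤ := by
  have hpos : 0 < m := Nat.pos_of_neZero m
  have htop : ⨆ μ ∈ Polynomial.nthRootsFinset m (1 : k), f.eigenspace μ = ⊤ := by
    rw [← ker_aeval_prod_X_sub_C, ← Polynomial.X_pow_sub_one_eq_prod hpos hζ]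
    simp [hf]
  refine eq_top_iff.mpr (htop ▸ iSup₂_le fun μ hμ => ?_)
  obtain ⟨i, hi, rfl⟩ := hζ.eq_pow_of_pow_eq_one ((Polynomial.mem_nthRootsFinset hpos 1).mp hμ)
  exact le_iSup_of_le ⟨i, hi⟩ le_rfl

theorem isInternal_eigenspace_pow {m : ℕ} [NeZero m] {ζ : k} (hζ : IsPrimitiveRoot ζ m)
    (f : End k V) (hf : f ^ m = 1) :
    DirectSum.IsInternal fun i : Fin m => f.eigenspace (ζ ^ (i : ℕ)) :=
  DirectSum.isInternal_submodule_of_iSupIndep_of_iSup_eq_top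
    (f.eigenspaces_iSupIndep.comp fun i j hij => Fin.ext (hζ.pow_inj i.2 j.2 hij))
    (iSup_eigenspace_pow_eq_top hζ f hf)

theorem finrank_eigenspace_le_inv [FiniteDimensional k V] (f : End k V)
    (hf : ⨆ μ, f.eigenspace μ = ⊤) (B : V →ₗ[k] V →ₗ[k] k)
    (hB : ∀ x : V, (∀ y : V, B x y = 0) → x = 0) (hBf : ∀ x y : V, B (f x) (f y) = B x y)
    (μ : k) : finrank k (f.eigenspace μ) ≤ finrank k (f.eigenspace μ⁻¹) := by
  set Φ := B.domRestrict₁₂ (f.eigenspace μ) (f.eigenspace μ⁻¹)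
  suffices hΦ : Function.Injective Φ by
    simpa only [Subspace.dual_finrank_eq] using LinearMap.finrank_le_finrank_of_injective hΦ
  refine (injective_iff_map_eq_zero Φ).mpr fun x hx => Subtype.ext (hB x fun y => ?_)
  -- `B (x, y) = μ ν B (x, y)` for `y ∈ V_ν`, and `ν = μ⁻¹` when `μ ν = 1`.
  have hker : ∀ ν, f.eigenspace ν ≤ LinearMap.ker (B x) := by
    intro ν y hy
    have hxy : μ * ν * B x y = B x y := by
      simpa [mem_eigenspace_iff.mp x.2, mem_eigenspace_iff.mp hy, mul_assoc, mul_left_comm]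
        using hBf x y
    by_cases hμν : μ * ν = 1
    · rw [eq_inv_of_mul_eq_one_right hμν] at hy
      exact LinearMap.congr_fun hx ⟨y, hy⟩
    · by_contra hne
      exact hμν ((mul_eq_right₀ hne).mp hxy)
  exact (hf ▸ iSup_le hker : ⊤ ≤ LinearMap.ker (B x)) Submodule.mem_top

theorem finrank_eigenspace_inv [FiniteDimensional k V] (f : End k V)
    (hf : ⨆ μ, f.eigenspace μ = ⊤) (B : V →ₗ[k] V →ₗ[k] k)
    (hB : ∀ x : V, (∀ y : V, B x y = 0) → x = 0) (hBf : ∀ x y : V, B (f x) (f y) = B x y)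
    (μ : k) : finrank k (f.eigenspace μ⁻¹) = finrank k (f.eigenspace μ) := by
  have hle := finrank_eigenspace_le_inv f hf B hB hBf μ⁻¹
  rw [inv_inv] at hle
  exact le_antisymm hle (finrank_eigenspace_le_inv f hf B hB hBf μ)

end Module.End

theorem Fin.val_neg_add_val {m : ℕ} [NeZero m] (i : Fin m) :
    ((-i : Fin m) : ℕ) + i = if i = 0 then 0 else m := by
  split_ifs with hi
  · simp [hi]
  · rw [Fin.val_neg', Nat.mod_eq_of_lt (by have := Fin.pos_iff_ne_zero.mpr hi; omega)]
    omega

theorem IsPrimitiveRoot.pow_val_neg_mul_pow_val {M : Type*} [CommMonoid M] {m : ℕ} [NeZero m]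
    {ζ : M} (hζ : IsPrimitiveRoot ζ m) (i : Fin m) :
    ζ ^ ((-i : Fin m) : ℕ) * ζ ^ (i : ℕ) = 1 := by
  rw [← pow_add, Fin.val_neg_add_val]
  split_ifs
  exacts [pow_zero ζ, hζ.pow_eq_one]

theorem Fin.two_mul_sum_mul_val_neg {m : ℕ} [NeZero m] (d : Fin m → ℕ)
    (hd : ∀ i, d (-i) = d i) :
    2 * ∑ i, d i * ((-i : Fin m) : ℕ) = m * (∑ i, d i - d 0) := by
  have hswap : ∑ i, d i * ((-i : Fin m) : ℕ) = ∑ i, d i * i :=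
    Fintype.sum_equiv (Equiv.neg _) _ _ fun i => by simp [hd]
  calc 2 * ∑ i, d i * ((-i : Fin m) : ℕ)
      = ∑ i, d i * (((-i : Fin m) : ℕ) + i) := by
        rw [two_mul]; nth_rw 2 [hswap]; simp only [mul_add, Finset.sum_add_distrib]
    _ = ∑ i ∈ Finset.univ.erase 0, m * d i := by
        rw [← Finset.add_sum_erase _ _ (Finset.mem_univ 0)]
        simp only [Fin.val_neg_add_val, ↓reduceIte, mul_zero, zero_add]
        exact Finset.sum_congr rfl fun i hi => by simp [(Finset.mem_erase.mp hi).1, mul_comm]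
    _ = m * (∑ i, d i - d 0) := by
        rw [← Finset.mul_sum, ← Finset.add_sum_erase _ _ (Finset.mem_univ 0),
          Nat.add_sub_cancel_left]

namespace PowerSeries
variable {k : Type*} [Field k] {m : ℕ} [NeZero m] {ζ : k}

theorem X_pow_dvd_of_pow_smul_rescale_eq (hζ : IsPrimitiveRoot ζ m) (e : Fin m) {f : k⟦X⟧}
    (hf : ζ ^ (e : ℕ) • rescale ζ f = f) : X ^ ((-e : Fin m) : ℕ) ∣ f := by
  refine X_pow_dvd_iff.mpr fun l hl => ?_
  have hfl : ζ ^ ((e : ℕ) + l) * coeff l f = coeff l f := by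
    simpa [coeff_rescale, pow_add, mul_assoc] using congrArg (coeff l) hf
  -- `l < -e` forces `0 < e + l < m`
  have hne : ζ ^ ((e : ℕ) + l) ≠ 1 := by
    have := Fin.val_neg_add_val e
    split_ifs at this with he
    · omega
    · exact hζ.pow_ne_one_of_pos_of_lt (by have := Fin.pos_iff_ne_zero.mpr he; omega) (by omega)
  by_contra h0
  exact hne ((mul_eq_right₀ h0).mp hfl)

theorem pow_smul_rescale_X_pow_val_neg (hζ : IsPrimitiveRoot ζ m) (e : Fin m) :
    ζ ^ (e : ℕ) • rescale ζ (X ^ ((-e : Fin m) : ℕ)) = (X : k⟦X⟧) ^ ((-e : Fin m) : ℕ) := by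
  rw [map_pow, rescale_X, mul_pow, ← map_pow, smul_eq_C_mul, ← mul_assoc, ← map_mul,
    mul_comm (ζ ^ (e : ℕ)), hζ.pow_val_neg_mul_pow_val, map_one, one_mul]

theorem finrank_quotient_of_mem_iff_X_pow_dvd {M ι : Type*} [AddCommGroup M] [Module k⟦X⟧ M]
    [Module k M] [IsScalarTower k k⟦X⟧ M] [Fintype ι] (c : Module.Basis ι k⟦X⟧ M) (n : ι → ℕ)
    (S : Submodule k⟦X⟧ M) (hS : ∀ x, x ∈ S ↔ ∀ j, X ^ n j ∣ c.repr x j) :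
    Module.finrank k (M ⧸ S.restrictScalars k) = ∑ j, n j := by
  let trunc : (ι → k⟦X⟧) →ₗ[k] (j : ι) → Fin (n j) → k :=
    LinearMap.pi fun j => LinearMap.pi fun l : Fin (n j) => coeff l ∘ₗ LinearMap.proj j
  let φ : M →ₗ[k] (j : ι) → Fin (n j) → k := trunc ∘ₗ (c.equivFun.restrictScalars k).toLinearMap
  have hker : LinearMap.ker φ = S.restrictScalars k := by
    ext x
    simp only [LinearMap.mem_ker, Submodule.restrictScalars_mem, hS, X_pow_dvd_iff, funext_iff]
    simp [φ, trunc, Fin.forall_iff]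
  have hφ : Function.Surjective φ := fun w => by
    refine ⟨c.equivFun.symm fun j => mk fun l => if h : l < n j then w j ⟨l, h⟩ else 0, ?_⟩
    ext j l
    simp only [φ, trunc, LinearMap.comp_apply, LinearEquiv.coe_coe,
      LinearEquiv.restrictScalars_apply, LinearEquiv.apply_symm_apply]
    simp
  rw [Submodule.quotEquivOfEq _ _ hker.symm |>.trans (φ.quotKerEquivOfSurjective hφ) |>.finrank_eq]
  simp [Module.finrank_pi_fintype]

theorem finrank_quotient_span_fixedPoints {V ι : Type*} [AddCommGroup V] [Module k V] [Fintype ι]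
    (hζ : IsPrimitiveRoot ζ m) (b : Module.Basis ι k V) (e : ι → Fin m)
    (σ : k⟦X⟧ ⊗[k] V →ₗ[k] k⟦X⟧ ⊗[k] V)
    (hσ : ∀ f j, σ (f ⊗ₜ b j) = (ζ ^ (e j : ℕ) • rescale ζ f) ⊗ₜ b j) :
    Module.finrank k ((k⟦X⟧ ⊗[k] V) ⧸
        (Submodule.span k⟦X⟧ {x : k⟦X⟧ ⊗[k] V | σ x = x}).restrictScalars k) =
      ∑ j, ((-e j : Fin m) : ℕ) := by
  set c := Algebra.TensorProduct.basis k⟦X⟧ b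
  have hexpand : ∀ x, x = ∑ j, c.repr x j ⊗ₜ b j := fun x => by
    conv_lhs => rw [← c.sum_repr x]
    simp only [c, Algebra.TensorProduct.basis_repr_symm_apply']
  have hcoord : ∀ x j, c.repr (σ x) j = ζ ^ (e j : ℕ) • rescale ζ (c.repr x j) := fun x j => by
    have : σ x = ∑ i, (ζ ^ (e i : ℕ) • rescale ζ (c.repr x i)) • c i := by
      conv_lhs => rw [hexpand x]
      simp only [map_sum, hσ, c, Algebra.TensorProduct.basis_repr_symm_apply']
    rw [this, c.repr_sum_self]
  refine finrank_quotient_of_mem_iff_X_pow_dvd c _ _ fun x => ⟨fun hx => ?_, fun hx => ?_⟩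
  · induction hx using Submodule.span_induction with
    | mem x hx =>
      exact fun j =>
        X_pow_dvd_of_pow_smul_rescale_eq hζ (e j) (by rw [← hcoord, show σ x = x from hx])
    | zero => simp
    | add x y _ _ hx hy => exact fun j => by simpa using dvd_add (hx j) (hy j)
    | smul a x _ hx => exact fun j => by simpa using (hx j).mul_left a
  · choose q hq using hx
    rw [← c.sum_repr x]
    refine Submodule.sum_mem _ fun j _ => ?_
    rw [hq, mul_comm, mul_smul, Algebra.TensorProduct.basis_repr_symm_apply']
    refine Submodule.smul_mem _ _ (Submodule.subset_span ?_)
    change σ _ = _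
    rw [hσ, pow_smul_rescale_X_pow_val_neg hζ]

end PowerSeries

/-- Same setup as Statement 6 (`ζ` a primitive `m`-th root of unity,
`g^m = 1` on the finite-dimensional space `V`, `σ(f ⊗ v) = f(ζX) ⊗ g(v)` on `k⟦X⟧ ⊗ V`,
`S` the `k⟦X⟧`-submodule generated by the `σ`-fixed elements); assume in addition that
`V` carries a nondegenerate `g`-invariant bilinear form `B`.  Then
`2·dim_k((k⟦X⟧ ⊗ V)/S) = m·(dim_k V − dim_k V^g)`. -/
theorem quotient_dim_via_invariant_bilinear_form
    {k V : Type*} [Field k] [AddCommGroup V] [Module k V] [FiniteDimensional k V]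
    {m : ℕ} (hm : 1 ≤ m) {ζ : k} (hζ : IsPrimitiveRoot ζ m)
    (g : V ≃ₗ[k] V) (hg : g ^ m = 1)
    (σ : PowerSeries k ⊗[k] V →ₗ[k] PowerSeries k ⊗[k] V)
    (hσ : ∀ (f : PowerSeries k) (v : V),
      σ (f ⊗ₜ[k] v) = PowerSeries.rescale ζ f ⊗ₜ[k] g v)
    (B : V →ₗ[k] V →ₗ[k] k)
    (hB : ∀ x : V, (∀ y : V, B x y = 0) → x = 0)
    (hBg : ∀ x y : V, B (g x) (g y) = B x y) :
    2 * Module.finrank k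
        ((PowerSeries k ⊗[k] V) ⧸
          (Submodule.span (PowerSeries k)
            {x : PowerSeries k ⊗[k] V | σ x = x}).restrictScalars k) =
      m * (Module.finrank k V -
        Module.finrank k (LinearMap.ker ((g : V →ₗ[k] V) - LinearMap.id))) := by
  have : NeZero m := ⟨by omega⟩
  set f : Module.End k V := (g : V →ₗ[k] V)
  have hfm : f ^ m = 1 := by
    have := congrArg LinearEquiv.automorphismGroup.toLinearMapMonoidHom hg
    rwa [map_pow, map_one] at this
  set E : Fin m → Submodule k V := fun i => f.eigenspace (ζ ^ (i : ℕ))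
  have hE : DirectSum.IsInternal E := Module.End.isInternal_eigenspace_pow hζ f hfm
  let b := hE.collectedBasis fun i => Module.finBasis k (E i)
  have hgb : ∀ j, g (b j) = ζ ^ (j.1 : ℕ) • b j := fun j =>
    Module.End.mem_eigenspace_iff.mp (hE.collectedBasis_mem _ j)
  have htop : ⨆ μ, f.eigenspace μ = ⊤ :=
    eq_top_iff.mpr <| (Module.End.iSup_eigenspace_pow_eq_top hζ f hfm).ge.trans <|
      iSup_le fun i => le_iSup _ _
  have hsym : ∀ i, Module.finrank k (E (-i)) = Module.finrank k (E i) := fun i => by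
    rw [show E (-i) = f.eigenspace (ζ ^ (i : ℕ))⁻¹ by
      rw [← eq_inv_of_mul_eq_one_left (hζ.pow_val_neg_mul_pow_val i)]]
    exact Module.End.finrank_eigenspace_inv f htop B hB hBg _
  have hfix : LinearMap.ker (f - LinearMap.id) = E 0 := by
    simp [E, Module.End.eigenspace_def, Module.End.one_eq_id]
  rw [PowerSeries.finrank_quotient_span_fixedPoints hζ b (fun j => j.1) σ
      (fun f j => by rw [hσ, hgb, tmul_smul, smul_tmul']),
    Module.finrank_eq_card_basis b, Fintype.card_sigma, hfix, Fintype.sum_sigma]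
  simpa using Fin.two_mul_sum_mul_val_neg (fun i => Module.finrank k (E i)) hsym
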